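/- Let G1 and G2 be isomorphic finite simple graphs with isomorphism π, and let p ∈ [0,1]. Form the random noisy graph Ḡ2 on the vertex set of G2 by removing each edge of G2 independently with probability p; formally, sample keep : E(G2) → Bool from the product over the edge set of Bernoulli distributions with success probability 1 − p, and let Ḡ2 be the spanning subgraph of G2 whose edge set is {e ∈ E(G2) : keep(e) = true}. Then for any node i of G1 with nonempty neighborhood, the expected value of MNC(i, π(i)) — computed with neighborhoods in the second graph taken in Ḡ2 and the mapped neighborhood Ñ^π(i) = π(N_{G1}(i)) — equals 1 − p. -/

import Mathlib

/-!
The isomorphism `π` maps `N_{G1}(i)` onto `N_{G2}(π i)`, and the noisy neighbourhood of `π i` is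
contained in `N_{G2}(π i)`; so the Jaccard ratio `MNC(i, π i)` is just the fraction of the
`deg(π i)` edges at `π i` that survive. By linearity of expectation, each survives with
probability `1 - p`.
-/

open MeasureTheory

/-- Matched neighborhood consistency (real-valued): the Jaccard similarity between the
mapped neighborhood `π '' N_{G1}(i)` and the neighborhood `N_{G2'}(j)` where `G2'` may be
a noisy version of the second graph. -/
noncomputable def MNC {V1 V2 : Type*} (G1 : SimpleGraph V1) (G2' : SimpleGraph V2)
    (π : V1 → V2) (i : V1) (j : V2) : ℝ :=
  (((π '' G1.neighborSet i) ∩ G2'.neighborSet j).ncard : ℝ) /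
    (((π '' G1.neighborSet i) ∪ G2'.neighborSet j).ncard : ℝ)

/-- The noisy version of `G2` determined by `keep : E(G2) → Bool`: the spanning subgraph
of `G2` whose edges are exactly the edges of `G2` on which `keep` is `true`. -/
def noisyGraph {V2 : Type*} (G2 : SimpleGraph V2) (keep : G2.edgeSet → Bool) :
    SimpleGraph V2 :=
  SimpleGraph.fromEdgeSet {e : Sym2 V2 | ∃ h : e ∈ G2.edgeSet, keep ⟨e, h⟩ = true}

open scoped NNReal

lemma MNC_eq_ncard_div_of_image_eq {V1 V2 : Type*} (G1 : SimpleGraph V1)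
    {G H : SimpleGraph V2} (π : V1 → V2) {i : V1} {j : V2}
    (hπ : π '' G1.neighborSet i = G.neighborSet j) (hHG : H ≤ G) :
    MNC G1 H π i j = ((H.neighborSet j).ncard : ℝ) / (G.neighborSet j).ncard := by
  have hsub := SimpleGraph.neighborSet_mono hHG j
  rw [MNC, hπ, Set.inter_eq_right.mpr hsub, Set.union_eq_left.mpr hsub]

section noisyGraph

variable {V : Type*} (G : SimpleGraph V) (keep : G.edgeSet → Bool)

lemma noisyGraph_adj {u v : V} :
    (noisyGraph G keep).Adj u v ↔ ∃ h : G.Adj u v, keep ⟨s(u, v), h⟩ = true := by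
  simp only [noisyGraph, SimpleGraph.fromEdgeSet_adj, Set.mem_ofPred_eq]
  exact ⟨fun ⟨h, _⟩ => h, fun h => ⟨h, h.1.ne⟩⟩

lemma noisyGraph_le : noisyGraph G keep ≤ G := fun _ _ h => ((noisyGraph_adj G keep).mp h).1

lemma ncard_neighborSet_noisyGraph (v : V) [Fintype (G.neighborSet v)] :
    ((noisyGraph G keep).neighborSet v).ncard
      = ∑ w : G.neighborSet v, (keep ⟨s(v, w), w.2⟩).toNat := by
  have hset : (noisyGraph G keep).neighborSet v
      = Subtype.val '' {w : G.neighborSet v | keep ⟨s(v, w), w.2⟩ = true} := by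
    ext w
    simp [noisyGraph_adj]
  rw [hset, Set.ncard_image_of_injective _ Subtype.val_injective, Set.ncard_eq_toFinset_card',
    Set.toFinset_setOf]
  simp only [Bool.toNat, Bool.cond_eq_ite]
  exact Finset.card_filter _ _

end noisyGraph

lemma integral_toNat_eval_pi_bernoulli {ι : Type*} [Fintype ι] (q : ℝ≥0) (hq : q ≤ 1)
    (e : ι) :
    ∫ keep : ι → Bool, ((keep e).toNat : ℝ)
      ∂(Measure.pi fun _ => (PMF.bernoulli q hq).toMeasure) = q := by
  have hmap := integral_map (μ := Measure.pi fun _ => (PMF.bernoulli q hq).toMeasure)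
    (measurable_pi_apply e).aemeasurable
    (measurable_of_countable fun b : Bool => (b.toNat : ℝ)).aestronglyMeasurable
  rw [(measurePreserving_eval _ e).map_eq] at hmap
  simp [← hmap, PMF.integral_eq_sum, PMF.bernoulli_apply]

/-- Theorem 3.1: Let `π : G1 ≃g G2` be an isomorphism and form `Ḡ2` from
`G2` by removing each edge independently with probability `p`.  Then for every node `i`
with nonempty neighborhood, `𝔼(MNC(i, π(i))) = 1 - p`. -/
theorem expected_mnc_under_noise {V1 V2 : Type*} [Fintype V2]
    (G1 : SimpleGraph V1) (G2 : SimpleGraph V2) [DecidableRel G2.Adj]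
    (π : G1 ≃g G2) (p : ℝ) (hp0 : 0 ≤ p) (hp1 : p ≤ 1)
    (i : V1) (hne : (G1.neighborSet i).Nonempty) :
    ∫ keep : G2.edgeSet → Bool,
        MNC G1 (noisyGraph G2 keep) (⇑π) i (π i)
      ∂(Measure.pi fun _ : G2.edgeSet =>
        (PMF.bernoulli (Real.toNNReal (1 - p))
          (by rw [Real.toNNReal_le_one]; linarith)).toMeasure)
      = 1 - p := by
  have hπ : π '' G1.neighborSet i = G2.neighborSet (π i) := π.image_neighborSet
  have hdeg : ((G2.neighborSet (π i)).ncard : ℝ) ≠ 0 := by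
    have := (hne.image π).ncard_pos (Set.toFinite _)
    rw [hπ] at this
    positivity
  simp_rw [MNC_eq_ncard_div_of_image_eq G1 π hπ (noisyGraph_le G2 _),
    ncard_neighborSet_noisyGraph, Nat.cast_sum]
  rw [integral_div, integral_finset_sum _ fun _ _ => .of_finite]
  simp_rw [integral_toNat_eval_pi_bernoulli, Real.coe_toNNReal _ (sub_nonneg.mpr hp1)]
  rw [Finset.sum_const, Finset.card_univ, nsmul_eq_mul, ← Nat.card_eq_fintype_card,
    Nat.card_coe_set_eq, mul_div_cancel_left₀ _ hdeg]
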